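/- Let ψ : g₁ → g₂ be a Lie algebra morphism between underlying Lie algebras of Lie quasi-bialgebras G₁ and G₂, let t ∈ A(g₁*, g₁), and set t' = ψ ∘ t ∘ ψ*. Then ψ is a Lie quasi-bialgebra morphism from G₁ to G₂ if and only if ψ is a Lie quasi-bialgebra morphism from G₁^t to G₂^{t'}. -/

import Mathlib

/-!
Twisting adds to the cocycle the terms `ad_x t + t ad*_x`, which any Lie morphism `ψ` carries
to the corresponding terms for `t' = ψ t ψ*` since `ψ* ad*_{ψ x} = ad*_x ψ*`. Once the cocycles
are intertwined, so are the terms `⟨ζ, [tξ, tη] + ϖ_{tξ} η⟩` added to the associator. Hence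
both conditions for the twisted pair reduce to those for the untwisted one.
-/

section

/-- Twisted cocycle `ϖ^t_x = ϖ_x + ad_x ∘ t + t ∘ ad*_x`. -/
def twC {K L : Type*} [Field K] [LieRing L] [LieAlgebra K L]
    (ϖ : L → Module.Dual K L →ₗ[K] L) (t : Module.Dual K L →ₗ[K] L) :
    L → Module.Dual K L →ₗ[K] L :=
  fun x => ϖ x + LieAlgebra.ad K L x ∘ₗ t + t ∘ₗ (LieAlgebra.ad K L x).dualMap

/-- Twisted associator pairing
`⟨ξ⊗η⊗ζ, φ^t⟩ = ⟨ξ⊗η⊗ζ, φ⟩ + Cyc_{(ξ,η,ζ)} ⟨ζ, [tξ,tη] + ϖ_{tξ} η⟩`. -/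
def twA {K L : Type*} [Field K] [LieRing L] [LieAlgebra K L]
    (ϖ : L → Module.Dual K L →ₗ[K] L)
    (Φ : Module.Dual K L → Module.Dual K L → Module.Dual K L → K)
    (t : Module.Dual K L →ₗ[K] L) :
    Module.Dual K L → Module.Dual K L → Module.Dual K L → K :=
  fun ξ η ζ =>
    Φ ξ η ζ + (ζ ⁅t ξ, t η⁆ + ζ (ϖ (t ξ) η))
      + (ξ ⁅t η, t ζ⁆ + ξ (ϖ (t η) ζ))
      + (η ⁅t ζ, t ξ⁆ + η (ϖ (t ζ) ξ))


theorem LieHom.ad_comp {R L M : Type*} [CommRing R] [LieRing L] [LieAlgebra R L]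
    [LieRing M] [LieAlgebra R M] (ψ : L →ₗ⁅R⁆ M) (x : L) :
    LieAlgebra.ad R M (ψ x) ∘ₗ ψ.toLinearMap = ψ.toLinearMap ∘ₗ LieAlgebra.ad R L x := by
  ext y
  simp

theorem LieHom.dualMap_comp_ad_dualMap {R L M : Type*} [CommRing R] [LieRing L]
    [LieAlgebra R L] [LieRing M] [LieAlgebra R M] (ψ : L →ₗ⁅R⁆ M) (x : L) :
    ψ.toLinearMap.dualMap ∘ₗ (LieAlgebra.ad R M (ψ x)).dualMap
      = (LieAlgebra.ad R L x).dualMap ∘ₗ ψ.toLinearMap.dualMap := by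
  rw [LinearMap.dualMap_comp_dualMap, LinearMap.dualMap_comp_dualMap, ψ.ad_comp]

section Twist

variable {K L M : Type*} [Field K] [LieRing L] [LieAlgebra K L] [LieRing M] [LieAlgebra K M]
  (ψ : L →ₗ⁅K⁆ M) (t : Module.Dual K L →ₗ[K] L)

theorem LieHom.map_twC_eq_iff (ϖ₁ : L → Module.Dual K L →ₗ[K] L)
    (ϖ₂ : M → Module.Dual K M →ₗ[K] M) (x : L) (ξ : Module.Dual K M) :
    ψ (twC ϖ₁ t x (ψ.toLinearMap.dualMap ξ))
        = twC ϖ₂ (ψ.toLinearMap ∘ₗ t ∘ₗ ψ.toLinearMap.dualMap) (ψ x) ξ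
      ↔ ψ (ϖ₁ x (ψ.toLinearMap.dualMap ξ)) = ϖ₂ (ψ x) ξ := by
  have hdual := LinearMap.congr_fun (ψ.dualMap_comp_ad_dualMap x) ξ
  simp only [LinearMap.comp_apply] at hdual
  simp only [twC, LinearMap.add_apply, LinearMap.comp_apply, LieAlgebra.ad_apply, map_add,
    LieHom.coe_toLinearMap, LieHom.map_lie, hdual, add_left_inj]

theorem LieHom.twist_term_eq (ϖ₁ : L → Module.Dual K L →ₗ[K] L)
    (ϖ₂ : M → Module.Dual K M →ₗ[K] M)
    (hϖ : ∀ (x : L) (ξ : Module.Dual K M), ψ (ϖ₁ x (ψ.toLinearMap.dualMap ξ)) = ϖ₂ (ψ x) ξ)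
    (α β γ : Module.Dual K M) :
    γ ⁅ψ (t (ψ.toLinearMap.dualMap α)), ψ (t (ψ.toLinearMap.dualMap β))⁆
        + γ (ϖ₂ (ψ (t (ψ.toLinearMap.dualMap α))) β)
      = ψ.toLinearMap.dualMap γ ⁅t (ψ.toLinearMap.dualMap α), t (ψ.toLinearMap.dualMap β)⁆
        + ψ.toLinearMap.dualMap γ
            (ϖ₁ (t (ψ.toLinearMap.dualMap α)) (ψ.toLinearMap.dualMap β)) := by
  rw [← LieHom.map_lie, ← hϖ]
  rfl

theorem LieHom.twA_eq_iff (ϖ₁ : L → Module.Dual K L →ₗ[K] L)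
    (Φ₁ : Module.Dual K L → Module.Dual K L → Module.Dual K L → K)
    (ϖ₂ : M → Module.Dual K M →ₗ[K] M)
    (Φ₂ : Module.Dual K M → Module.Dual K M → Module.Dual K M → K)
    (hϖ : ∀ (x : L) (ξ : Module.Dual K M), ψ (ϖ₁ x (ψ.toLinearMap.dualMap ξ)) = ϖ₂ (ψ x) ξ)
    (ξ η ζ : Module.Dual K M) :
    twA ϖ₂ Φ₂ (ψ.toLinearMap ∘ₗ t ∘ₗ ψ.toLinearMap.dualMap) ξ η ζ
        = twA ϖ₁ Φ₁ t (ψ.toLinearMap.dualMap ξ) (ψ.toLinearMap.dualMap η)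
            (ψ.toLinearMap.dualMap ζ)
      ↔ Φ₂ ξ η ζ = Φ₁ (ψ.toLinearMap.dualMap ξ) (ψ.toLinearMap.dualMap η)
            (ψ.toLinearMap.dualMap ζ) := by
  simp only [twA, LinearMap.comp_apply, LieHom.coe_toLinearMap, ψ.twist_term_eq t ϖ₁ ϖ₂ hϖ,
    add_left_inj]

end Twist

theorem stmt_13_general {K L M : Type*} [Field K] [LieRing L] [LieAlgebra K L]
    [LieRing M] [LieAlgebra K M]
    (ϖ₁ : L →ₗ[K] Module.Dual K L →ₗ[K] L)
    (Φ₁ : Module.Dual K L → Module.Dual K L → Module.Dual K L → K)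
    (ϖ₂ : M →ₗ[K] Module.Dual K M →ₗ[K] M)
    (Φ₂ : Module.Dual K M → Module.Dual K M → Module.Dual K M → K)
    (ψ : L →ₗ⁅K⁆ M)
    (t : Module.Dual K L →ₗ[K] L) :
    ((∀ (x : L) (ξ : Module.Dual K M),
        ψ (ϖ₁ x (ψ.toLinearMap.dualMap ξ)) = ϖ₂ (ψ x) ξ)
      ∧ (∀ ξ η ζ : Module.Dual K M,
          Φ₂ ξ η ζ = Φ₁ (ψ.toLinearMap.dualMap ξ) (ψ.toLinearMap.dualMap η)
            (ψ.toLinearMap.dualMap ζ)))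
    ↔
    ((∀ (x : L) (ξ : Module.Dual K M),
        ψ (twC (fun a => ϖ₁ a) t x (ψ.toLinearMap.dualMap ξ))
          = twC (fun a => ϖ₂ a)
              (ψ.toLinearMap ∘ₗ t ∘ₗ ψ.toLinearMap.dualMap) (ψ x) ξ)
      ∧ (∀ ξ η ζ : Module.Dual K M,
          twA (fun a => ϖ₂ a) Φ₂ (ψ.toLinearMap ∘ₗ t ∘ₗ ψ.toLinearMap.dualMap) ξ η ζ
            = twA (fun a => ϖ₁ a) Φ₁ t (ψ.toLinearMap.dualMap ξ)
                (ψ.toLinearMap.dualMap η) (ψ.toLinearMap.dualMap ζ))) := by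
  have hϖ_iff := forall₂_congr (ψ.map_twC_eq_iff t (fun a => ϖ₁ a) (fun a => ϖ₂ a))
  exact (and_congr_right fun hϖ => forall₃_congr fun ξ η ζ =>
    (ψ.twA_eq_iff t _ Φ₁ _ Φ₂ hϖ ξ η ζ).symm).trans (and_congr_left' hϖ_iff.symm)

/-- A Lie algebra morphism `ψ : g₁ → g₂` is a Lie quasi-bialgebra morphism
`G₁ → G₂` iff it is a Lie quasi-bialgebra morphism `G₁^t → G₂^{t'}`, where
`t' = ψ ∘ t ∘ ψ*`. -/
theorem stmt_13 {K L M : Type*} [Field K] [LieRing L] [LieAlgebra K L]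
    [LieRing M] [LieAlgebra K M]
    (ϖ₁ : L →ₗ[K] Module.Dual K L →ₗ[K] L)
    (Φ₁ : Module.Dual K L → Module.Dual K L → Module.Dual K L → K)
    (ϖ₂ : M →ₗ[K] Module.Dual K M →ₗ[K] M)
    (Φ₂ : Module.Dual K M → Module.Dual K M → Module.Dual K M → K)
    (ψ : L →ₗ⁅K⁆ M)
    (t : Module.Dual K L →ₗ[K] L)
    (ht : ∀ ξ η : Module.Dual K L, ξ (t η) = - η (t ξ)) :
    ((∀ (x : L) (ξ : Module.Dual K M),
        ψ (ϖ₁ x (ψ.toLinearMap.dualMap ξ)) = ϖ₂ (ψ x) ξ)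
      ∧ (∀ ξ η ζ : Module.Dual K M,
          Φ₂ ξ η ζ = Φ₁ (ψ.toLinearMap.dualMap ξ) (ψ.toLinearMap.dualMap η)
            (ψ.toLinearMap.dualMap ζ)))
    ↔
    ((∀ (x : L) (ξ : Module.Dual K M),
        ψ (twC (fun a => ϖ₁ a) t x (ψ.toLinearMap.dualMap ξ))
          = twC (fun a => ϖ₂ a)
              (ψ.toLinearMap ∘ₗ t ∘ₗ ψ.toLinearMap.dualMap) (ψ x) ξ)
      ∧ (∀ ξ η ζ : Module.Dual K M,
          twA (fun a => ϖ₂ a) Φ₂ (ψ.toLinearMap ∘ₗ t ∘ₗ ψ.toLinearMap.dualMap) ξ η ζ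
            = twA (fun a => ϖ₁ a) Φ₁ t (ψ.toLinearMap.dualMap ξ)
                (ψ.toLinearMap.dualMap η) (ψ.toLinearMap.dualMap ζ))) :=
  stmt_13_general ϖ₁ Φ₁ ϖ₂ Φ₂ ψ t

end
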